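/- Let h be the 4-state cellular automaton on states Q = Fin 2 ⊕ Fin 2 (plain states p(0), p(1) and tilde states t(0), t(1)) defined by: h(x, t(b), t(b')) = t(b') for all x; h(p(a), p(c), p(a')) = p(a); h(p(a), p(1), t(b)) = p(1) if a = b and p(0) if a ≠ b; and h takes the value p(0) in all remaining cases. Then for every n ≥ 1, all u : Fin n → Fin 2 and all v : Fin n → Fin 2, writing p∘u for the plain encoding of u and t∘v for the tilde encoding of v, h^n(p∘u, p(1), t∘v) = p(1) if u i = v i for all i, and h^n(p∘u, p(1), t∘v) = p(0) otherwise. Consequently the matrix M_{p(1)}^n of h has at least 2^n distinct rows, i.e. its one-way complexity is exponential in n. -/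
import Mathlib


/-- The `n`-th iterate of a one-dimensional CA local rule `f`, applied to an
assignment `x` of states to integer positions. It only depends on positions `-n,…,n`:
`caIter f 1 x = f (x (-1)) (x 0) (x 1)` and
`caIter f (n+1) x = f (caIter f n (x shifted left)) (caIter f n x) (caIter f n (x shifted right))`. -/
def caIter {Q : Type*} (f : Q → Q → Q → Q) : ℕ → (ℤ → Q) → Q
  | 0, x => x 0
  | n + 1, x =>
      f (caIter f n fun i => x (i - 1)) (caIter f n x) (caIter f n fun i => x (i + 1))

/-- The assignment of states to integer positions determined by left cells `u`
(`u i` at position `-(i+1)`), center `c` (position `0`) and right cells `v`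
(`v i` at position `i+1`); positions outside `-n,…,n` (irrelevant for `caIter f n`)
are padded with `c`. -/
def caEmbed {Q : Type*} (n : ℕ) (u : Fin n → Q) (c : Q) (v : Fin n → Q) : ℤ → Q :=
  fun i =>
    if h : 1 ≤ i ∧ i ≤ (n : ℤ) then v ⟨(i - 1).toNat, by omega⟩
    else if h' : 1 ≤ -i ∧ -i ≤ (n : ℤ) then u ⟨(-i - 1).toNat, by omega⟩
    else c

/-- `f^n(u, c, v)`. -/
def caApply {Q : Type*} (f : Q → Q → Q → Q) (n : ℕ) (u : Fin n → Q) (c : Q)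
    (v : Fin n → Q) : Q :=
  caIter f n (caEmbed n u c v)

/-- Number of distinct rows of the matrix `M_c^n`. -/
noncomputable def caRows {Q : Type*} (f : Q → Q → Q → Q) (n : ℕ) (c : Q) : ℕ :=
  Set.ncard {g : (Fin n → Q) → Q | ∃ u : Fin n → Q, g = fun v => caApply f n u c v}

/-- Number of distinct columns of the matrix `M_c^n`. -/
noncomputable def caCols {Q : Type*} (f : Q → Q → Q → Q) (n : ℕ) (c : Q) : ℕ :=
  Set.ncard {g : (Fin n → Q) → Q | ∃ v : Fin n → Q, g = fun u => caApply f n u c v}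

/-- `d_n(f)` for an ECA `f`. -/
noncomputable def dnECA (f : Bool → Bool → Bool → Bool) (n : ℕ) : ℕ :=
  max (max (caRows f n false) (caCols f n false)) (max (caRows f n true) (caCols f n true))

def caStep {Q : Type*} (f : Q → Q → Q → Q) (x : ℤ → Q) : ℤ → Q :=
  fun i => f (x (i - 1)) (x i) (x (i + 1))

lemma caIter_succ {Q : Type*} (f : Q → Q → Q → Q) (n : ℕ) (x : ℤ → Q) :
    caIter f (n + 1) x = caIter f n (caStep f x) := by
  induction n generalizing x with
  | zero => rfl
  | succ n ih =>
      show f (caIter f (n+1) fun i => x (i - 1)) (caIter f (n+1) x)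
          (caIter f (n+1) fun i => x (i + 1)) =
        f (caIter f n fun i => caStep f x (i - 1)) (caIter f n (caStep f x))
          (caIter f n fun i => caStep f x (i + 1))
      rw [ih, ih, ih]
      congr 1 <;> · apply congrArg; funext j; simp only [caStep]; ring_nf

lemma caIter_eq_iterate {Q : Type*} (f : Q → Q → Q → Q) (n : ℕ) (x : ℤ → Q) :
    caIter f n x = (caStep f)^[n] x 0 := by
  induction n generalizing x with
  | zero => rfl
  | succ n ih => rw [caIter_succ, ih, ← Function.iterate_succ_apply]


lemma fourState_key
    (h : Fin 2 ⊕ Fin 2 → Fin 2 ⊕ Fin 2 → Fin 2 ⊕ Fin 2 → Fin 2 ⊕ Fin 2)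
    (h1 : ∀ (x : Fin 2 ⊕ Fin 2) (b b' : Fin 2), h x (Sum.inr b) (Sum.inr b') = Sum.inr b')
    (h2 : ∀ a c a' : Fin 2, h (Sum.inl a) (Sum.inl c) (Sum.inl a') = Sum.inl a)
    (h3 : ∀ a b : Fin 2, h (Sum.inl a) (Sum.inl 1) (Sum.inr b) =
      if a = b then Sum.inl 1 else Sum.inl 0)
    (h4 : ∀ x y z : Fin 2 ⊕ Fin 2,
      ((∃ b b' : Fin 2, y = Sum.inr b ∧ z = Sum.inr b') ∨
       (∃ a c a' : Fin 2, x = Sum.inl a ∧ y = Sum.inl c ∧ z = Sum.inl a') ∨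
       (∃ a b : Fin 2, x = Sum.inl a ∧ y = Sum.inl 1 ∧ z = Sum.inr b)) ∨
      h x y z = Sum.inl 0)
    (n : ℕ) (u v : Fin n → Fin 2) (t : ℕ) (ht : t ≤ n) :
    (∀ k : ℕ, 1 ≤ k →
      (caStep h)^[t] (caEmbed n (fun i => Sum.inl (u i)) (Sum.inl 1)
          (fun i => Sum.inr (v i))) (-(k : ℤ)) =
        Sum.inl (if hj : k - 1 + t < n then u ⟨k - 1 + t, hj⟩ else 1)) ∧
    ((caStep h)^[t] (caEmbed n (fun i => Sum.inl (u i)) (Sum.inl 1)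
          (fun i => Sum.inr (v i))) 0 =
        if ∀ i : Fin n, (i : ℕ) < t → u i = v i then Sum.inl 1 else Sum.inl 0) ∧
    (∀ i : ℕ, (hi1 : 1 ≤ i) → (hi2 : i + t ≤ n) →
      (caStep h)^[t] (caEmbed n (fun i => Sum.inl (u i)) (Sum.inl 1)
          (fun i => Sum.inr (v i))) (i : ℤ) =
        Sum.inr (v ⟨i - 1 + t, by omega⟩)) := by
  set x₀ := caEmbed n (fun i => Sum.inl (u i)) (Sum.inl 1) (fun i => Sum.inr (v i)) with hx₀
  induction t with
  | zero =>
      refine ⟨fun k hk => ?_, ?_, fun i hi1 hi2 => ?_⟩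
      · simp only [Function.iterate_zero, id_eq, hx₀, caEmbed]
        rw [dif_neg (by omega)]
        by_cases hkn : k ≤ n
        · rw [dif_pos (by omega : 1 ≤ -(-(k:ℤ)) ∧ -(-(k:ℤ)) ≤ (n:ℤ)), dif_pos (by omega)]
          have ev : (-(-(k:ℤ)) - 1).toNat = k - 1 + 0 := by omega
          simp only [ev]
        · rw [dif_neg (by omega), dif_neg (by omega)]
      · simp only [Function.iterate_zero, id_eq, hx₀, caEmbed]
        rw [dif_neg (by omega), dif_neg (by omega),
          if_pos (fun i hi => absurd hi (by omega))]
      · simp only [Function.iterate_zero, id_eq, hx₀, caEmbed]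
        rw [dif_pos (by omega : 1 ≤ (i:ℤ) ∧ (i:ℤ) ≤ (n:ℤ))]
        have ev : ((i:ℤ) - 1).toNat = i - 1 + 0 := by omega
        simp only [ev]
  | succ t ih =>
      obtain ⟨ia, ib, ic⟩ := ih (by omega)
      have ht' : t < n := by omega
      refine ⟨fun k hk => ?_, ?_, fun i hi1 hi2 => ?_⟩
      · -- negative positions: plain region shifts right
        rw [Function.iterate_succ_apply']
        simp only [caStep]
        have e1 : (-(k : ℤ)) - 1 = -((k + 1 : ℕ) : ℤ) := by omega
        rw [e1, ia (k + 1) (by omega), ia k hk]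
        have hz : ∃ c : Fin 2, (caStep h)^[t] x₀ ((-(k : ℤ)) + 1) = Sum.inl c := by
          rcases eq_or_lt_of_le hk with hk1 | hk2
          · have e2 : (-(k : ℤ)) + 1 = 0 := by omega
            rw [e2, ib]
            split <;> exact ⟨_, rfl⟩
          · have e2 : (-(k : ℤ)) + 1 = -((k - 1 : ℕ) : ℤ) := by omega
            rw [e2, ia (k - 1) (by omega)]
            exact ⟨_, rfl⟩
        obtain ⟨c, hc⟩ := hz
        rw [hc, h2]
        by_cases hkt : k + t < n
        · rw [dif_pos (by omega : k + 1 - 1 + t < n), dif_pos (by omega)]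
          have ev : k + 1 - 1 + t = k - 1 + (t + 1) := by omega
          simp only [ev]
        · rw [dif_neg (by omega), dif_neg (by omega)]
      · -- center
        rw [Function.iterate_succ_apply']
        simp only [caStep]
        have e1 : (0 : ℤ) - 1 = -((1 : ℕ) : ℤ) := by omega
        have e2 : (0 : ℤ) + 1 = ((1 : ℕ) : ℤ) := by omega
        rw [e1, e2, ia 1 le_rfl, ib, ic 1 le_rfl (by omega),
          dif_pos (by omega : 1 - 1 + t < n)]
        simp only [Nat.sub_self, Nat.zero_add]
        by_cases hP : ∀ i : Fin n, (i : ℕ) < t → u i = v i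
        · rw [if_pos hP, h3]
          by_cases he : u ⟨t, ht'⟩ = v ⟨t, ht'⟩
          · rw [if_pos he, if_pos ?_]
            intro i hi
            rcases Nat.lt_succ_iff_lt_or_eq.mp hi with h' | h'
            · exact hP i h'
            · have : i = ⟨t, ht'⟩ := Fin.ext h'
              rw [this]; exact he
          · rw [if_neg he, if_neg ?_]
            intro hall
            exact he (hall ⟨t, ht'⟩ (Nat.lt_succ_self t))
        · rw [if_neg hP]
          rcases h4 (Sum.inl (u ⟨t, ht'⟩)) (Sum.inl 0) (Sum.inr (v ⟨t, ht'⟩)) with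
            (⟨b, b', hy, hz⟩ | ⟨a, c, a', hx, hy, hz⟩ | ⟨a, b, hx, hy, hz⟩) | heq
          · exact absurd hy (by simp)
          · exact absurd hz (by simp)
          · simp only [Sum.inl.injEq] at hy
            exact absurd hy (by decide)
          · rw [heq, if_neg ?_]
            intro hall
            exact hP fun i hi => hall i (by omega)
      · -- positive positions: tilde region shifts left
        rw [Function.iterate_succ_apply']
        simp only [caStep]
        have e2 : (i : ℤ) + 1 = ((i + 1 : ℕ) : ℤ) := by omega
        conv_lhs => rw [e2]
        rw [ic i hi1 (by omega), ic (i + 1) (by omega) (by omega), h1]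
        have ev : i + 1 - 1 + t = i - 1 + (t + 1) := by omega
        simp only [ev]


/-- The 4-state comparison CA on `Fin 2 ⊕ Fin 2` (plain states `Sum.inl a`, tilde
states `Sum.inr b`): tilde states shift left to the center, plain states shift right to
the center, and a plain center `1` meeting a tilde compares the incoming bits. After `n`
steps with left cells `u` (plain), center `1` (plain) and right cells `v` (tilde), the
result is plain `1` iff `u = v`; consequently `M_{p(1)}^n` has at least `2^n` distinct
rows, i.e. exponentially many. -/
theorem fourState_exponential (h : Fin 2 ⊕ Fin 2 → Fin 2 ⊕ Fin 2 → Fin 2 ⊕ Fin 2 → Fin 2 ⊕ Fin 2)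
    (h1 : ∀ (x : Fin 2 ⊕ Fin 2) (b b' : Fin 2), h x (Sum.inr b) (Sum.inr b') = Sum.inr b')
    (h2 : ∀ a c a' : Fin 2, h (Sum.inl a) (Sum.inl c) (Sum.inl a') = Sum.inl a)
    (h3 : ∀ a b : Fin 2, h (Sum.inl a) (Sum.inl 1) (Sum.inr b) =
      if a = b then Sum.inl 1 else Sum.inl 0)
    (h4 : ∀ x y z : Fin 2 ⊕ Fin 2,
      ((∃ b b' : Fin 2, y = Sum.inr b ∧ z = Sum.inr b') ∨
       (∃ a c a' : Fin 2, x = Sum.inl a ∧ y = Sum.inl c ∧ z = Sum.inl a') ∨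
       (∃ a b : Fin 2, x = Sum.inl a ∧ y = Sum.inl 1 ∧ z = Sum.inr b)) ∨
      h x y z = Sum.inl 0) :
    ∀ n : ℕ, 1 ≤ n →
      (∀ u v : Fin n → Fin 2,
        ((∀ i : Fin n, u i = v i) →
          caApply h n (fun i => Sum.inl (u i)) (Sum.inl 1) (fun i => Sum.inr (v i)) =
            Sum.inl 1) ∧
        (¬ (∀ i : Fin n, u i = v i) →
          caApply h n (fun i => Sum.inl (u i)) (Sum.inl 1) (fun i => Sum.inr (v i)) =
            Sum.inl 0)) ∧
      2 ^ n ≤ caRows h n (Sum.inl 1) := by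
  intro n hn
  classical
  have main : ∀ u v : Fin n → Fin 2,
      caApply h n (fun i => Sum.inl (u i)) (Sum.inl 1) (fun i => Sum.inr (v i)) =
        if ∀ i : Fin n, u i = v i then Sum.inl 1 else Sum.inl 0 := by
    intro u v
    have key := (fourState_key h h1 h2 h3 h4 n u v n le_rfl).2.1
    rw [caApply, caIter_eq_iterate, key]
    have hiff : (∀ i : Fin n, (i : ℕ) < n → u i = v i) ↔ (∀ i : Fin n, u i = v i) :=
      ⟨fun H i => H i i.isLt, fun H i _ => H i⟩
    rw [if_congr hiff rfl rfl]
  refine ⟨fun u v => ⟨fun hu => ?_, fun hu => ?_⟩, ?_⟩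
  · rw [main u v, if_pos hu]
  · rw [main u v, if_neg hu]
  · set φ : (Fin n → Fin 2) → ((Fin n → (Fin 2 ⊕ Fin 2)) → (Fin 2 ⊕ Fin 2)) :=
      fun u₀ => fun v' => caApply h n (fun i => Sum.inl (u₀ i)) (Sum.inl 1) v' with hφ
    have hinj : Function.Injective φ := by
      intro a b hab
      by_contra hne
      have hne' : ¬ ∀ i : Fin n, b i = a i := by
        intro H
        exact hne (funext fun i => (H i).symm)
      have e1 : φ a (fun i => Sum.inr (a i)) = Sum.inl 1 := by
        rw [hφ]
        simp only []
        rw [main a a, if_pos (fun i => rfl)]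
      have e2 : φ b (fun i => Sum.inr (a i)) = Sum.inl 0 := by
        rw [hφ]
        simp only []
        rw [main b a, if_neg hne']
      rw [hab, e2] at e1
      simp at e1
    have hsub : Set.range φ ⊆
        {g : (Fin n → (Fin 2 ⊕ Fin 2)) → (Fin 2 ⊕ Fin 2) |
          ∃ u₀ : Fin n → (Fin 2 ⊕ Fin 2), g = fun v' => caApply h n u₀ (Sum.inl 1) v'} := by
      rintro g ⟨u₀, rfl⟩
      exact ⟨fun i => Sum.inl (u₀ i), rfl⟩
    have hcard : (Set.range φ).ncard = 2 ^ n := by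
      rw [← Nat.card_coe_set_eq, Nat.card_range_of_injective hinj]
      simp [Nat.card_eq_fintype_card]
    calc 2 ^ n = (Set.range φ).ncard := hcard.symm
      _ ≤ _ := Set.ncard_le_ncard hsub (Set.toFinite _)
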